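/- Let (p_n), (q_n) be sequences of positive reals and (x_n) a sequence of reals, and set μ_n = p_n/(p_n + q_n). If liminf_{n→∞} x_n/μ_n > 1 and p_n → ∞ as n → ∞, then I_{x_n}(p_n, q_n) → 1 as n → ∞. -/

import Mathlib

open MeasureTheory Filter

/-- The regularized incomplete Beta function `I_x(p,q) = B_x(p,q)/B(p,q)`,
extended by `0` for `x < 0` and by `1` for `x > 1`. -/
noncomputable def regIncBeta (p q x : ℝ) : ℝ :=
  (∫ u in Set.Ioo (0 : ℝ) (min x 1), u ^ (p - 1) * (1 - u) ^ (q - 1)) /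
    (∫ u in Set.Ioo (0 : ℝ) 1, u ^ (p - 1) * (1 - u) ^ (q - 1))

/-!
The Beta(p, q) distribution has mean `μ = p/(p+q)` and variance `μ(1-μ)/(p+q+1) ≤ μ²/p`, both read
off from `B(p+1, q) = μ B(p, q)`. By Chebyshev's inequality the mass `1 - I_x(p,q)` it puts beyond
`x ≥ rμ`, `r > 1`, is therefore at most `1/((r-1)² p)`, which tends to `0` as `p → ∞`.
-/

open Set ProbabilityTheory

noncomputable def betaKernel (p q u : ℝ) : ℝ := u ^ (p - 1) * (1 - u) ^ (q - 1)

lemma betaKernel_pos {p q u : ℝ} (hu : u ∈ Ioo (0 : ℝ) 1) : 0 < betaKernel p q u :=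
  mul_pos (Real.rpow_pos_of_pos hu.1 _) (Real.rpow_pos_of_pos (sub_pos.2 hu.2) _)

lemma betaKernel_add_one_left {p q u : ℝ} (hu : 0 < u) :
    betaKernel (p + 1) q u = u * betaKernel p q u := by
  rw [betaKernel, betaKernel, add_sub_right_comm, Real.rpow_add_one hu.ne']
  ring

lemma ofReal_betaKernel {p q u : ℝ} (hu : u ∈ Icc (0 : ℝ) 1) :
    ((betaKernel p q u : ℝ) : ℂ) = (u : ℂ) ^ ((p : ℂ) - 1) * (1 - (u : ℂ)) ^ ((q : ℂ) - 1) := by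
  rw [betaKernel, Complex.ofReal_mul, Complex.ofReal_cpow hu.1,
    Complex.ofReal_cpow (sub_nonneg.2 hu.2)]
  push_cast
  rfl

lemma integrableOn_betaKernel {p q : ℝ} (hp : 0 < p) (hq : 0 < q) :
    IntegrableOn (betaKernel p q) (Ioo 0 1) := by
  have hC := (intervalIntegrable_iff_integrableOn_Ioc_of_le zero_le_one).1
    (Complex.betaIntegral_convergent (u := p) (v := q) (by simpa) (by simpa))
  refine (IntegrableOn.congr_fun hC.re (fun u hu => ?_) measurableSet_Ioc).mono_set
    Ioo_subset_Ioc_self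
  rw [← ofReal_betaKernel (Ioc_subset_Icc_self hu)]
  exact Complex.ofReal_re _

lemma integral_betaKernel {p q : ℝ} (hp : 0 < p) (hq : 0 < q) :
    ∫ u in Ioo 0 1, betaKernel p q u = beta p q := by
  rw [beta_eq_betaIntegralReal p q hp hq, Complex.betaIntegral,
    intervalIntegral.integral_of_le zero_le_one,
    ← setIntegral_congr_fun measurableSet_Ioc fun u hu => ofReal_betaKernel (Ioc_subset_Icc_self hu),
    integral_complex_ofReal, Complex.ofReal_re, integral_Ioc_eq_integral_Ioo]

lemma ProbabilityTheory.beta_add_one_left {p q : ℝ} (hp : 0 < p) (hq : 0 < q) :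
    beta (p + 1) q = p / (p + q) * beta p q := by
  have hpq : p + q ≠ 0 := by positivity
  rw [beta, beta, add_right_comm, Real.Gamma_add_one hp.ne', Real.Gamma_add_one hpq]
  have := (Real.Gamma_pos_of_pos (add_pos hp hq)).ne'
  field_simp

lemma integral_sq_sub_mul_betaKernel {p q : ℝ} (hp : 0 < p) (hq : 0 < q) :
    ∫ u in Ioo 0 1, (u - p / (p + q)) ^ 2 * betaKernel p q u
      = p / (p + q) * (1 - p / (p + q)) / (p + q + 1) * beta p q := by
  set μ := p / (p + q)
  have hexpand : ∀ u ∈ Ioo (0 : ℝ) 1, (u - μ) ^ 2 * betaKernel p q u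
      = betaKernel (p + 1 + 1) q u - 2 * μ * betaKernel (p + 1) q u + μ ^ 2 * betaKernel p q u := by
    intro u hu
    rw [betaKernel_add_one_left hu.1, betaKernel_add_one_left hu.1]
    ring
  have hint : ∀ s, 0 < s → IntegrableOn (betaKernel s q) (Ioo 0 1) :=
    fun s hs => integrableOn_betaKernel hs hq
  rw [setIntegral_congr_fun measurableSet_Ioo hexpand, integral_add, integral_sub,
    integral_const_mul, integral_const_mul, integral_betaKernel (by positivity) hq,
    integral_betaKernel (by positivity) hq, integral_betaKernel hp hq,
    beta_add_one_left (by positivity) hq, beta_add_one_left hp hq]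
  · have : p + q ≠ 0 := by positivity
    have : p + q + 1 ≠ 0 := by positivity
    simp only [μ]
    field_simp
    ring
  · exact hint (p + 1 + 1) (by positivity)
  · exact (hint (p + 1) (by positivity)).const_mul _
  · exact (hint (p + 1 + 1) (by positivity)).sub ((hint (p + 1) (by positivity)).const_mul _)
  · exact (hint p hp).const_mul _

lemma regIncBeta_eq {p q : ℝ} (hp : 0 < p) (hq : 0 < q) (x : ℝ) :
    regIncBeta p q x = (∫ u in Ioo 0 (min x 1), betaKernel p q u) / beta p q := by
  rw [← integral_betaKernel hp hq]
  rfl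

lemma regIncBeta_le_one {p q : ℝ} (hp : 0 < p) (hq : 0 < q) (x : ℝ) :
    regIncBeta p q x ≤ 1 := by
  rw [regIncBeta_eq hp hq, div_le_one (beta_pos hp hq), ← integral_betaKernel hp hq]
  exact setIntegral_mono_set (integrableOn_betaKernel hp hq)
    (ae_restrict_of_forall_mem measurableSet_Ioo fun u hu => (betaKernel_pos hu).le)
    (Ioo_subset_Ioo_right (min_le_right x 1)).eventuallyLE

lemma regIncBeta_of_one_le {p q x : ℝ} (hp : 0 < p) (hq : 0 < q) (hx : 1 ≤ x) :
    regIncBeta p q x = 1 := by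
  rw [regIncBeta_eq hp hq, min_eq_right hx, integral_betaKernel hp hq,
    div_self (beta_pos hp hq).ne']

lemma one_sub_regIncBeta_eq {p q x : ℝ} (hp : 0 < p) (hq : 0 < q) (hx₀ : 0 < x) (hx₁ : x < 1) :
    1 - regIncBeta p q x = (∫ u in Ico x 1, betaKernel p q u) / beta p q := by
  have hk := integrableOn_betaKernel hp hq
  have hsplit := setIntegral_union (μ := volume) (f := betaKernel p q)
    (Ico_disjoint_Ico_same.mono_left Ioo_subset_Ico_self) measurableSet_Ico
    (hk.mono_set (Ioo_subset_Ioo_right hx₁.le)) (hk.mono_set (Ico_subset_Ioo_left hx₀))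
  rw [Ioo_union_Ico_eq_Ioo hx₀ hx₁.le, integral_betaKernel hp hq] at hsplit
  rw [regIncBeta_eq hp hq, min_eq_left hx₁.le, eq_div_iff (beta_pos hp hq).ne', sub_mul,
    one_mul, div_mul_cancel₀ _ (beta_pos hp hq).ne']
  linarith

lemma one_sub_regIncBeta_le {p q x : ℝ} (hp : 0 < p) (hq : 0 < q) (hx : p / (p + q) < x) :
    1 - regIncBeta p q x
      ≤ p / (p + q) * (1 - p / (p + q)) / (p + q + 1) / (x - p / (p + q)) ^ 2 := by
  set μ := p / (p + q)
  have hμ₀ : 0 < μ := by positivity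
  have hμ₁ : μ < 1 := (div_lt_one (by positivity)).2 (by linarith)
  have hxμ : 0 < x - μ := sub_pos.2 hx
  rcases le_or_gt 1 x with h1x | hx1
  · rw [regIncBeta_of_one_le hp hq h1x, sub_self]
    have : 0 < 1 - μ := sub_pos.2 hμ₁
    positivity
  have hB := beta_pos hp hq
  have hsub : Ico x 1 ⊆ Ioo 0 1 := Ico_subset_Ioo_left (hμ₀.trans hx)
  have hk := integrableOn_betaKernel hp hq
  have hg : IntegrableOn (fun u => ((x - μ) ^ 2)⁻¹ * ((u - μ) ^ 2 * betaKernel p q u))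
      (Ioo 0 1) :=
    (hk.continuousOn_mul_of_subset (g := fun u => (u - μ) ^ 2) (by fun_prop) isCompact_Icc
      measurableSet_Ioo Ioo_subset_Icc_self).const_mul _
  rw [one_sub_regIncBeta_eq hp hq (hμ₀.trans hx) hx1, div_le_iff₀ hB]
  calc ∫ u in Ico x 1, betaKernel p q u
      ≤ ∫ u in Ico x 1, ((x - μ) ^ 2)⁻¹ * ((u - μ) ^ 2 * betaKernel p q u) := by
        refine setIntegral_mono_on (hk.mono_set hsub) (hg.mono_set hsub) measurableSet_Ico
          fun u hu => (le_inv_mul_iff₀ (pow_pos hxμ 2)).2 ?_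
        exact mul_le_mul_of_nonneg_right (pow_le_pow_left₀ hxμ.le (by linarith [hu.1]) 2)
          (betaKernel_pos (hsub hu)).le
    _ ≤ ∫ u in Ioo 0 1, ((x - μ) ^ 2)⁻¹ * ((u - μ) ^ 2 * betaKernel p q u) :=
        setIntegral_mono_set hg (ae_restrict_of_forall_mem measurableSet_Ioo fun u hu =>
          mul_nonneg (by positivity) (mul_nonneg (sq_nonneg _) (betaKernel_pos hu).le))
          hsub.eventuallyLE
    _ = μ * (1 - μ) / (p + q + 1) / (x - μ) ^ 2 * beta p q := by
        rw [integral_const_mul, integral_sq_sub_mul_betaKernel hp hq]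
        ring

lemma one_sub_regIncBeta_le_of_mul_le {p q x r : ℝ} (hp : 0 < p) (hq : 0 < q) (hr : 1 < r)
    (hx : r * (p / (p + q)) ≤ x) :
    1 - regIncBeta p q x ≤ ((r - 1) ^ 2 * p)⁻¹ := by
  set μ := p / (p + q) with hμ
  have hμ₀ : 0 < μ := by positivity
  have hμ₁ : μ ≤ 1 := (div_le_one (by positivity)).2 (by linarith)
  have hr₀ : 0 < r - 1 := sub_pos.2 hr
  have hxμ : (r - 1) * μ ≤ x - μ := by linarith
  calc 1 - regIncBeta p q x ≤ μ * (1 - μ) / (p + q + 1) / (x - μ) ^ 2 :=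
        one_sub_regIncBeta_le hp hq (by nlinarith)
    _ ≤ μ * (1 - μ) / (p + q + 1) / ((r - 1) * μ) ^ 2 := by
        have : 0 ≤ 1 - μ := sub_nonneg.2 hμ₁
        gcongr
    _ = q / (p + q + 1) * ((r - 1) ^ 2 * p)⁻¹ := by
        rw [hμ]
        field_simp
        ring
    _ ≤ ((r - 1) ^ 2 * p)⁻¹ := by
        refine mul_le_of_le_one_left (by positivity) ((div_le_one (by positivity)).2 ?_)
        linarith

/-- If `liminf x_n/μ_n > 1` with `μ_n = p_n/(p_n+q_n)` and `p_n → ∞`,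
then `I_{x_n}(p_n,q_n) → 1`. -/
theorem regIncBeta_tendsto_one_of_liminf_ratio_gt_one
    (p q : ℕ → ℝ) (x : ℕ → ℝ) (hp : ∀ n, 0 < p n) (hq : ∀ n, 0 < q n)
    (hliminf : 1 < Filter.liminf (fun n => ((x n / (p n / (p n + q n))) : EReal)) atTop)
    (hptop : Tendsto p atTop atTop) :
    Tendsto (fun n => regIncBeta (p n) (q n) (x n)) atTop (nhds 1) := by
  obtain ⟨r, hr₁, hr⟩ := EReal.exists_between_coe_real hliminf
  replace hr₁ : 1 < r := EReal.coe_lt_coe_iff.1 hr₁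
  have hx : ∀ᶠ n in atTop, r * (p n / (p n + q n)) ≤ x n := by
    filter_upwards [eventually_lt_of_lt_liminf hr] with n hn
    have hμ : 0 < p n / (p n + q n) := div_pos (hp n) (add_pos (hp n) (hq n))
    exact ((lt_div_iff₀ hμ).1 (EReal.coe_lt_coe_iff.1 hn)).le
  have hlower : Tendsto (fun n => 1 - ((r - 1) ^ 2 * p n)⁻¹) atTop (nhds 1) := by
    simpa using ((hptop.const_mul_atTop (by nlinarith)).inv_tendsto_atTop).const_sub 1
  refine tendsto_of_tendsto_of_tendsto_of_le_of_le' hlower tendsto_const_nhds ?_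
    (.of_forall fun n => regIncBeta_le_one (hp n) (hq n) (x n))
  filter_upwards [hx] with n hn
  linarith [one_sub_regIncBeta_le_of_mul_le (hp n) (hq n) hr₁ hn]
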